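/- Let V be a variety and σ₁, σ₂ hypersubstitutions of type τ. If σ₁(f_i) ≈ σ₂(f_i) is an identity of V for every operation symbol f_i, then σ̄₁(p) ≈ σ̄₂(p) is an identity of V for every term p; consequently the derived varieties V_{σ₁} and V_{σ₂} coincide. -/

import Mathlib

inductive Term (I : Type) (τ : I → ℕ) : Type
  | var : ℕ → Term I τ
  | app : (i : I) → (Fin (τ i) → Term I τ) → Term I τ

structure Alg (I : Type) (τ : I → ℕ) where
  carrier : Type
  nonempty : Nonempty carrier
  op : (i : I) → (Fin (τ i) → carrier) → carrier

def Alg.eval {I : Type} {τ : I → ℕ} (A : Alg I τ) (env : ℕ → A.carrier) :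
    Term I τ → A.carrier
  | .var n => env n
  | .app i args => A.op i (fun k => A.eval env (args k))

def Term.subst {I : Type} {τ : I → ℕ} (s : ℕ → Term I τ) : Term I τ → Term I τ
  | .var n => s n
  | .app i args => .app i (fun k => (args k).subst s)

def hsub {I : Type} {τ : I → ℕ} (σ : (i : I) → Term I τ) : Term I τ → Term I τ
  | .var n => .var n
  | .app i args =>
      (σ i).subst (fun n => if h : n < τ i then hsub σ (args ⟨n, h⟩) else .var n)

noncomputable def derived {I : Type} {τ : I → ℕ} (A : Alg I τ) (σ : (i : I) → Term I τ) : Alg I τ where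
  carrier := A.carrier
  nonempty := A.nonempty
  op := fun i args =>
    A.eval (fun n => if h : n < τ i then args ⟨n, h⟩ else Classical.choice A.nonempty) (σ i)

def varsLt {I : Type} {τ : I → ℕ} : Term I τ → ℕ → Prop
  | .var m, n => m < n
  | .app _ args, n => ∀ k, varsLt (args k) n

def satisfies {I : Type} {τ : I → ℕ} (A : Alg I τ) (p q : Term I τ) : Prop :=
  ∀ env : ℕ → A.carrier, A.eval env p = A.eval env q

/-- A class of algebras is a variety if it is an equational class. -/
def IsVariety {I : Type} {τ : I → ℕ} (V : Set (Alg I τ)) : Prop :=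
  ∃ E : Set (Term I τ × Term I τ), V = {A | ∀ e ∈ E, satisfies A e.1 e.2}

/-- The derived variety `V_σ`: the variety generated by the derived algebras
`A_σ`, `A ∈ V` (the models of the equational theory of that class). -/
def derivedVariety {I : Type} {τ : I → ℕ} (V : Set (Alg I τ))
    (σ : (i : I) → Term I τ) : Set (Alg I τ) :=
  {B | ∀ p q : Term I τ, (∀ A ∈ V, satisfies (derived A σ) p q) → satisfies B p q}

/-! Under `A ↦ A_σ` a term `p` is evaluated in `A_σ` exactly as `σ̄ p` is in `A`, and `σ̄₁ p`,
`σ̄₂ p` are obtained from the `σ₁ i`, `σ₂ i` by the same substitutions; so identities of `V`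
between the `σ₁ i` and `σ₂ i` propagate to all `σ̄₁ p ≈ σ̄₂ p`, and the algebras `A_{σ₁}`,
`A_{σ₂}` satisfy the same identities. -/

section

variable {I : Type} {τ : I → ℕ}

theorem Alg.eval_congr_of_varsLt (A : Alg I τ) {t : Term I τ} {n : ℕ} (ht : varsLt t n)
    {e₁ e₂ : ℕ → A.carrier} (he : ∀ m < n, e₁ m = e₂ m) :
    A.eval e₁ t = A.eval e₂ t := by
  induction t with
  | var m => exact he m ht
  | app i args ih =>
    simp only [Alg.eval]
    exact congrArg (A.op i) (funext fun k => ih k (ht k))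

theorem Alg.eval_subst (A : Alg I τ) (s : ℕ → Term I τ) (env : ℕ → A.carrier)
    (t : Term I τ) : A.eval env (t.subst s) = A.eval (fun n => A.eval env (s n)) t := by
  induction t with
  | var m => rfl
  | app i args ih =>
    simp only [Term.subst, Alg.eval]
    exact congrArg (A.op i) (funext ih)

theorem Alg.eval_derived (A : Alg I τ) {σ : (i : I) → Term I τ}
    (hσ : ∀ i, varsLt (σ i) (τ i)) (env : ℕ → A.carrier) (p : Term I τ) :
    (derived A σ).eval env p = A.eval env (hsub σ p) := by
  induction p with
  | var m => rfl
  | app i args ih =>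
    change A.eval _ (σ i) = A.eval env ((σ i).subst _)
    rw [A.eval_subst]
    -- the default value `derived` gives to variables `≥ τ i` is never read by `σ i`
    refine A.eval_congr_of_varsLt (hσ i) fun m hm => ?_
    rw [dif_pos hm]
    exact (dif_pos hm).trans (ih ⟨m, hm⟩)

theorem satisfies_derived_iff (A : Alg I τ) {σ : (i : I) → Term I τ}
    (hσ : ∀ i, varsLt (σ i) (τ i)) (p q : Term I τ) :
    satisfies (derived A σ) p q ↔ satisfies A (hsub σ p) (hsub σ q) :=
  forall_congr' fun env => Eq.congr (A.eval_derived hσ env p) (A.eval_derived hσ env q)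

theorem satisfies_hsub_of_forall_satisfies (A : Alg I τ) {σ₁ σ₂ : (i : I) → Term I τ}
    (h : ∀ i, satisfies A (σ₁ i) (σ₂ i)) (p : Term I τ) :
    satisfies A (hsub σ₁ p) (hsub σ₂ p) := by
  induction p with
  | var m => exact fun _ => rfl
  | app i args ih =>
    intro env
    change A.eval env ((σ₁ i).subst _) = A.eval env ((σ₂ i).subst _)
    rw [A.eval_subst, A.eval_subst, h i]
    congr 1
    funext n
    split_ifs with hn
    · exact ih ⟨n, hn⟩ env
    · rfl

theorem derivedVariety_eq_of_forall_satisfies_iff (V : Set (Alg I τ)) {σ₁ σ₂ : (i : I) → Term I τ}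
    (h : ∀ A ∈ V, ∀ p q, satisfies (derived A σ₁) p q ↔ satisfies (derived A σ₂) p q) :
    derivedVariety V σ₁ = derivedVariety V σ₂ := by
  ext B
  simp only [derivedVariety, Set.mem_ofPred_eq]
  exact forall₂_congr fun p q => imp_congr_left (forall₂_congr fun A hA => h A hA p q)

end

theorem derived_varieties_eq_general {I : Type} {τ : I → ℕ} (V : Set (Alg I τ))
    (σ₁ σ₂ : (i : I) → Term I τ)
    (hσ₁ : ∀ i, varsLt (σ₁ i) (τ i)) (hσ₂ : ∀ i, varsLt (σ₂ i) (τ i))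
    (h : ∀ i, ∀ A ∈ V, satisfies A (σ₁ i) (σ₂ i)) :
    (∀ p : Term I τ, ∀ A ∈ V, satisfies A (hsub σ₁ p) (hsub σ₂ p)) ∧
      derivedVariety V σ₁ = derivedVariety V σ₂ := by
  have hsub_identity (p : Term I τ) (A : Alg I τ) (hA : A ∈ V) :
      satisfies A (hsub σ₁ p) (hsub σ₂ p) :=
    satisfies_hsub_of_forall_satisfies A (fun i => h i A hA) p
  refine ⟨hsub_identity, derivedVariety_eq_of_forall_satisfies_iff V fun A hA p q => ?_⟩
  rw [satisfies_derived_iff A hσ₁, satisfies_derived_iff A hσ₂]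
  simp only [satisfies, hsub_identity p A hA _, hsub_identity q A hA _]

/-- If `σ₁(f_i) ≈ σ₂(f_i)` is an identity of the variety `V` for every
operation symbol `f_i`, then `σ̄₁(p) ≈ σ̄₂(p)` is an identity of `V` for every
term `p`, and the derived varieties `V_{σ₁}` and `V_{σ₂}` coincide. -/
theorem derived_varieties_eq {I : Type} {τ : I → ℕ} (V : Set (Alg I τ))
    (hV : IsVariety V) (σ₁ σ₂ : (i : I) → Term I τ)
    (hσ₁ : ∀ i, varsLt (σ₁ i) (τ i)) (hσ₂ : ∀ i, varsLt (σ₂ i) (τ i))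
    (h : ∀ i, ∀ A ∈ V, satisfies A (σ₁ i) (σ₂ i)) :
    (∀ p : Term I τ, ∀ A ∈ V, satisfies A (hsub σ₁ p) (hsub σ₂ p)) ∧
      derivedVariety V σ₁ = derivedVariety V σ₂ :=
  derived_varieties_eq_general V σ₁ σ₂ hσ₁ hσ₂ h
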